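/- Let G be a finitely generated nilpotent group and H a subgroup of infinite index in G. Then there exists a normal subgroup N of G containing H such that N has infinite index in G. -/

import Mathlib

/-!
`H ⊔ [G, G]` is normal because it contains the commutator subgroup. Suppose it had finite index.
Then `H ⊔ γᵢ` has finite index for every term `γᵢ` of the lower central series, by induction,
hence so does `H` because `γᵢ = ⊥` eventually. For the inductive step pass to `G ⧸ γᵢ₊₂`, where
the image of `γᵢ₊₁` is central and generated by commutators `⁅c, g⁆`. Powers of `c` and `g` lie in
`H ⊔ γᵢ₊₁`, i.e. in `H` up to central factors, and central commutators are bimultiplicative, so a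
power of `⁅c, g⁆` lies in `H`. Modulo `H`, the image of `H ⊔ γᵢ₊₁` is then a finitely generated
abelian torsion group, hence finite.
-/

open Subgroup
open scoped commutatorElement

section CentralCommutator

variable {G : Type*} [Group G] {a b u : G}

theorem conj_eq_self_of_mem_center (hu : u ∈ center G) (a : G) : a * u * a⁻¹ = u := by
  rw [mem_center_iff.mp hu a, mul_inv_cancel_right]

theorem commutatorElement_mul_left_of_mem_center (hu : u ∈ center G) (a b : G) :
    ⁅a * u, b⁆ = ⁅a, b⁆ := by
  rw [commutatorElement_mul_left_eq_conj_mul,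
    commutatorElement_eq_one_iff_commute.mpr (mem_center_iff.mp hu b).symm, mul_one,
    mul_inv_cancel, one_mul]

theorem commutatorElement_mul_right_of_mem_center (hu : u ∈ center G) (a b : G) :
    ⁅a, b * u⁆ = ⁅a, b⁆ := by
  rw [commutatorElement_mul_right_eq_mul_conj,
    commutatorElement_eq_one_iff_commute.mpr (mem_center_iff.mp hu a), mul_one,
    mul_inv_cancel_right]

theorem commutatorElement_pow_left_of_mem_center (h : ⁅a, b⁆ ∈ center G) :
    ∀ k : ℕ, ⁅a ^ k, b⁆ = ⁅a, b⁆ ^ k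
  | 0 => by simp
  | k + 1 => by
    rw [pow_succ', commutatorElement_mul_left_eq_conj_mul,
      commutatorElement_pow_left_of_mem_center h k, conj_eq_self_of_mem_center (pow_mem h k),
      pow_succ]

theorem commutatorElement_pow_right_of_mem_center (h : ⁅a, b⁆ ∈ center G) :
    ∀ k : ℕ, ⁅a, b ^ k⁆ = ⁅a, b⁆ ^ k
  | 0 => by simp
  | k + 1 => by
    rw [pow_succ, commutatorElement_mul_right_eq_mul_conj,
      commutatorElement_pow_right_of_mem_center h k, mul_assoc (⁅a, b⁆ ^ k),
      mul_assoc (⁅a, b⁆ ^ k), conj_eq_self_of_mem_center h, pow_succ]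

theorem commutatorElement_pow_mul_mem_of_mem_sup_center {H : Subgroup G} (hab : ⁅a, b⁆ ∈ center G)
    {m n : ℕ} (ha : a ^ m ∈ H ⊔ center G) (hb : b ^ n ∈ H ⊔ center G) : ⁅a, b⁆ ^ (m * n) ∈ H := by
  obtain ⟨h₁, hh₁, u₁, hu₁, ha⟩ := mem_sup_of_normal_right.mp ha
  obtain ⟨h₂, hh₂, u₂, hu₂, hb⟩ := mem_sup_of_normal_right.mp hb
  have hm : ⁅a, b⁆ ^ m = ⁅h₁, b⁆ := by
    rw [← commutatorElement_pow_left_of_mem_center hab, ← ha,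
      commutatorElement_mul_left_of_mem_center hu₁]
  have hmn : ⁅h₁, b⁆ ^ n = ⁅h₁, h₂⁆ := by
    rw [← commutatorElement_pow_right_of_mem_center (hm ▸ pow_mem hab m), ← hb,
      commutatorElement_mul_right_of_mem_center hu₂]
  rw [pow_mul, hm, hmn, commutatorElement_def]
  exact H.mul_mem (H.mul_mem (H.mul_mem hh₁ hh₂) (H.inv_mem hh₁)) (H.inv_mem hh₂)

end CentralCommutator

namespace Subgroup

variable {G : Type*} [Group G]

def centralIsolator (H : Subgroup G) : Subgroup G where
  carrier := {z | z ∈ center G ∧ ∃ n, 0 < n ∧ z ^ n ∈ H}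
  one_mem' := ⟨one_mem _, 1, one_pos, by simp⟩
  mul_mem' := by
    rintro x y ⟨hx, m, hm, hxm⟩ ⟨hy, n, hn, hyn⟩
    refine ⟨mul_mem hx hy, m * n, Nat.mul_pos hm hn, ?_⟩
    rw [Commute.mul_pow (mem_center_iff.mp hy x), pow_mul, mul_comm m, pow_mul]
    exact H.mul_mem (pow_mem hxm n) (pow_mem hyn m)
  inv_mem' := by
    rintro x ⟨hx, n, hn, hxn⟩
    exact ⟨inv_mem hx, n, hn, by rwa [inv_pow, inv_mem_iff]⟩

theorem relIndex_sup_ne_zero_of_le_centralIsolator {H Z : Subgroup G} (hZ : Z ≤ H.centralIsolator)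
    [Group.FG ↥(H ⊔ Z)] : H.relIndex (H ⊔ Z) ≠ 0 := by
  have hZc : Z ≤ center G := fun _ hz ↦ (hZ hz).1
  have : Z.Normal := ⟨fun z hz g ↦ (conj_eq_self_of_mem_center (hZc hz) g).symm ▸ hz⟩
  have : (H.subgroupOf (H ⊔ Z)).Normal := (normal_subgroupOf_iff_le_normalizer le_sup_left).mpr <|
    sup_le H.le_normalizer (hZc.trans (center_le_normalizer _))
  let f : Z →* ↥(H ⊔ Z) ⧸ H.subgroupOf (H ⊔ Z) :=
    (QuotientGroup.mk' _).comp (inclusion le_sup_right)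
  have hf : Function.Surjective f := by
    rintro ⟨⟨k, hk⟩⟩
    obtain ⟨z, hz, h, hh, rfl⟩ := mem_sup_of_normal_left.mp (sup_comm H Z ▸ hk : k ∈ Z ⊔ H)
    refine ⟨⟨z, hz⟩, (QuotientGroup.eq (s := H.subgroupOf (H ⊔ Z))).mpr ?_⟩
    simpa [mem_subgroupOf] using hh
  let _ : CommGroup (↥(H ⊔ Z) ⧸ H.subgroupOf (H ⊔ Z)) :=
    { mul_comm := by
        intro p q
        obtain ⟨z₁, rfl⟩ := hf p
        obtain ⟨z₂, rfl⟩ := hf q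
        rw [← map_mul, ← map_mul]
        congr 1
        exact Subtype.ext (mem_center_iff.mp (hZc z₂.2) z₁) }
  have : Group.FG (↥(H ⊔ Z) ⧸ H.subgroupOf (H ⊔ Z)) :=
    Group.fg_of_surjective (QuotientGroup.mk'_surjective _)
  have htor : IsMulTorsion (↥(H ⊔ Z) ⧸ H.subgroupOf (H ⊔ Z)) := by
    intro q
    obtain ⟨⟨z, hz⟩, rfl⟩ := hf q
    obtain ⟨-, n, hn, hzn⟩ := hZ hz
    refine isOfFinOrder_iff_pow_eq_one.mpr ⟨n, hn, ?_⟩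
    rw [← map_pow, MonoidHom.comp_apply, QuotientGroup.mk'_apply, QuotientGroup.eq_one_iff,
      mem_subgroupOf]
    exact hzn
  have := CommGroup.finite_of_fg_isMulTorsion _ htor
  exact index_ne_zero_of_finite

theorem finiteIndex_sup_commutator_commutator_top [Group.FG G] (H C : Subgroup G) [C.Normal]
    [(H ⊔ ⁅C, (⊤ : Subgroup G)⁆).FiniteIndex] :
    (H ⊔ ⁅⁅C, (⊤ : Subgroup G)⁆, (⊤ : Subgroup G)⁆).FiniteIndex := by
  set A := ⁅C, (⊤ : Subgroup G)⁆
  set B := ⁅A, (⊤ : Subgroup G)⁆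
  let π := QuotientGroup.mk' B
  have hπ : Function.Surjective π := QuotientGroup.mk'_surjective B
  have hA_central : A.map π ≤ center (G ⧸ B) := commutator_top_right_eq_bot_iff_le_center.mp <| by
    rw [← map_top_of_surjective π hπ, ← map_commutator, QuotientGroup.map_mk'_self]
  have hpow (g : G) : ∃ n, 0 < n ∧ π g ^ n ∈ H.map π ⊔ center (G ⧸ B) := by
    obtain ⟨n, hn, -, hgn⟩ :=
      exists_pow_mem_of_index_ne_zero (H := H ⊔ A) FiniteIndex.index_ne_zero g
    refine ⟨n, hn, sup_le_sup_left hA_central _ ?_⟩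
    rw [← map_sup, ← map_pow]
    exact mem_map_of_mem π hgn
  have hA_isolated : A.map π ≤ (H.map π).centralIsolator := by
    rw [map_commutator, map_top_of_surjective π hπ, commutator_le]
    rintro _ ⟨c, hc, rfl⟩ q -
    obtain ⟨g, rfl⟩ := hπ q
    have hcg : ⁅π c, π g⁆ ∈ center (G ⧸ B) :=
      hA_central ⟨⁅c, g⁆, commutator_mem_commutator hc (mem_top g), map_commutatorElement π c g⟩
    obtain ⟨m, hm, hcm⟩ := hpow c
    obtain ⟨n, hn, hgn⟩ := hpow g
    exact ⟨hcg, m * n, Nat.mul_pos hm hn,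
      commutatorElement_pow_mul_mem_of_mem_sup_center hcg hcm hgn⟩
  have : Group.FG ↥(H.map π ⊔ A.map π) := by
    rw [← map_sup]
    exact Group.fg_of_surjective (π.subgroupMap_surjective (H ⊔ A))
  have hrel : (H ⊔ B).relIndex (H ⊔ A) ≠ 0 := by
    rw [← QuotientGroup.ker_mk' B, ← comap_map_eq, relIndex_comap, map_sup]
    exact relIndex_sup_ne_zero_of_le_centralIsolator hA_isolated
  refine ⟨?_⟩
  rw [← relIndex_mul_index (sup_le_sup_left (commutator_le_left A ⊤) H)]
  exact mul_ne_zero hrel FiniteIndex.index_ne_zero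

theorem finiteIndex_of_finiteIndex_sup_commutator [Group.FG G] [Group.IsNilpotent G]
    (H : Subgroup G) [(H ⊔ _root_.commutator G).FiniteIndex] : H.FiniteIndex := by
  have hγ (n : ℕ) : (H ⊔ lowerCentralSeries ⊤ (n + 1)).FiniteIndex := by
    induction n with
    | zero => rwa [top_lowerCentralSeries_one]
    | succ n ih =>
      rw [lowerCentralSeries_succ] at ih
      exact finiteIndex_sup_commutator_commutator_top H (lowerCentralSeries ⊤ n)
  obtain ⟨n, hn⟩ := nilpotent_iff_lowerCentralSeries.mp ‹Group.IsNilpotent G›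
  have hbot : lowerCentralSeries (⊤ : Subgroup G) (n + 1) = ⊥ :=
    le_bot_iff.mp (hn ▸ lowerCentralSeries_antitone ⊤ n.le_succ)
  have := hγ n
  rwa [hbot, sup_bot_eq] at this

end Subgroup

theorem exists_normal_subgroup_of_infinite_index {G : Type*} [Group G] [Group.FG G]
    [Group.IsNilpotent G] (H : Subgroup G) (hH : Infinite (G ⧸ H)) :
    ∃ N : Subgroup G, N.Normal ∧ H ≤ N ∧ Infinite (G ⧸ N) := by
  refine ⟨H ⊔ commutator G, Subgroup.Normal.of_commutator_le _ le_sup_right, le_sup_left, ?_⟩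
  rw [← not_finite_iff_infinite, ← finiteIndex_iff_finite_quotient] at hH ⊢
  exact fun _ ↦ hH (finiteIndex_of_finiteIndex_sup_commutator H)
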